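/- arXiv:2410.09558 — 4 statements merged into one kernel-verified Lean document; each statement's English description precedes it below -/
import Mathlib

section
/- For any positive integer κ, the sum over k1, k2 ≥ 1 with lcm(k1,k2) = κ and gcd(k1,k2) > 1 of Λ(k1)Λ(k2)/lcm(k1,k2) equals (2·log κ − Λ(κ))·Λ(κ)/κ, where Λ is the von Mangoldt function. -/
/-!
A summand is nonzero only if `k₁` and `k₂` are prime powers; `gcd k₁ k₂ > 1` forces them to be
powers of one prime `p`, so `κ = lcm k₁ k₂ = p ^ m` and both sides vanish unless `κ` is a prime
power. For `κ = p ^ m` the pairs are `(p ^ a, p ^ b)` with `1 ≤ a, b ≤ m` and `max a b = m`: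
there are `2m - 1` of them, each contributing `(log p)² / p ^ m`, and
`(2m - 1) (log p)² = (2 log κ - Λ κ) Λ κ`.
-/

open ArithmeticFunction Finset

lemma Nat.lcm_pow_pow (p a b : ℕ) : Nat.lcm (p ^ a) (p ^ b) = p ^ max a b := by
  rcases le_total a b with h | h
  · rw [max_eq_right h]
    exact Nat.dvd_antisymm (Nat.lcm_dvd (pow_dvd_pow p h) dvd_rfl) (Nat.dvd_lcm_right _ _)
  · rw [max_eq_left h]
    exact Nat.dvd_antisymm (Nat.lcm_dvd dvd_rfl (pow_dvd_pow p h)) (Nat.dvd_lcm_left _ _)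

def lcmPairsNotCoprime (κ : ℕ) : Finset (ℕ × ℕ) :=
  (Icc 1 κ ×ˢ Icc 1 κ).filter (fun q => Nat.lcm q.1 q.2 = κ ∧ 1 < Nat.gcd q.1 q.2)

lemma lcm_isPrimePow_of_vonMangoldt_ne_zero {k₁ k₂ : ℕ} (h₁ : Λ k₁ ≠ 0) (h₂ : Λ k₂ ≠ 0)
    (hgcd : 1 < Nat.gcd k₁ k₂) : IsPrimePow (Nat.lcm k₁ k₂) := by
  obtain ⟨p, a, hp, ha, rfl⟩ := vonMangoldt_ne_zero_iff.1 h₁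
  obtain ⟨r, b, hr, -, rfl⟩ := vonMangoldt_ne_zero_iff.1 h₂
  obtain ⟨t, ht, htdvd⟩ := Nat.exists_prime_and_dvd hgcd.ne'
  have hpt : t = p := (Nat.prime_dvd_prime_iff_eq ht hp.nat_prime).1 <|
    ht.dvd_of_dvd_pow (htdvd.trans (Nat.gcd_dvd_left _ _))
  have hrt : t = r := (Nat.prime_dvd_prime_iff_eq ht hr.nat_prime).1 <|
    ht.dvd_of_dvd_pow (htdvd.trans (Nat.gcd_dvd_right _ _))
  subst hpt hrt
  rw [Nat.lcm_pow_pow]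
  exact ⟨t, max a b, hp, lt_max_of_lt_left ha, rfl⟩

lemma sum_lcmPairsNotCoprime_of_not_isPrimePow {κ : ℕ} (hκ : ¬IsPrimePow κ) :
    ∑ q ∈ lcmPairsNotCoprime κ, Λ q.1 * Λ q.2 / (Nat.lcm q.1 q.2 : ℝ) = 0 := by
  refine sum_eq_zero fun q hq => ?_
  obtain ⟨-, hlcm, hgcd⟩ := mem_filter.1 hq
  by_cases h₁ : Λ q.1 = 0
  · simp [h₁]
  by_cases h₂ : Λ q.2 = 0
  · simp [h₂]
  exact absurd (hlcm ▸ lcm_isPrimePow_of_vonMangoldt_ne_zero h₁ h₂ hgcd) hκ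

lemma lcmPairsNotCoprime_prime_pow {p : ℕ} (hp : p.Prime) (m : ℕ) :
    lcmPairsNotCoprime (p ^ m) = ((Icc 1 m ×ˢ Icc 1 m).filter (fun ab => max ab.1 ab.2 = m)).map
      ⟨fun ab => (p ^ ab.1, p ^ ab.2), (Nat.pow_right_injective hp.two_le).prodMap
        (Nat.pow_right_injective hp.two_le)⟩ := by
  ext ⟨k₁, k₂⟩
  simp only [lcmPairsNotCoprime, mem_filter, mem_map, mem_product, mem_Icc,
    Function.Embedding.coeFn_mk, Prod.mk.injEq, Prod.exists]
  constructor
  · rintro ⟨-, hlcm, hgcd⟩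
    obtain ⟨a, ha, rfl⟩ := (Nat.dvd_prime_pow hp).1 (hlcm ▸ Nat.dvd_lcm_left k₁ k₂)
    obtain ⟨b, hb, rfl⟩ := (Nat.dvd_prime_pow hp).1 (hlcm ▸ Nat.dvd_lcm_right _ _)
    rw [Nat.lcm_pow_pow] at hlcm
    refine ⟨a, b, ⟨⟨⟨Nat.pos_of_ne_zero ?_, ha⟩, Nat.pos_of_ne_zero ?_, hb⟩,
      Nat.pow_right_injective hp.two_le hlcm⟩, rfl, rfl⟩ <;>
    · rintro rfl
      simp at hgcd
  · rintro ⟨a, b, ⟨⟨⟨ha, ha'⟩, hb, hb'⟩, hmax⟩, rfl, rfl⟩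
    have hp_pos := hp.pos
    refine ⟨⟨⟨Nat.one_le_pow _ _ hp_pos, Nat.pow_le_pow_right hp_pos ha'⟩,
      Nat.one_le_pow _ _ hp_pos, Nat.pow_le_pow_right hp_pos hb'⟩,
      by rw [Nat.lcm_pow_pow, hmax], ?_⟩
    calc 1 < p := hp.one_lt
      _ ≤ Nat.gcd (p ^ a) (p ^ b) :=
        Nat.le_of_dvd (Nat.gcd_pos_of_pos_left _ (pow_pos hp_pos a)) <|
          Nat.dvd_gcd (dvd_pow_self p (Nat.one_le_iff_ne_zero.1 ha))
            (dvd_pow_self p (Nat.one_le_iff_ne_zero.1 hb))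

lemma card_filter_max_eq (m : ℕ) :
    ((Icc 1 m ×ˢ Icc 1 m).filter (fun ab => max ab.1 ab.2 = m)).card = 2 * m - 1 := by
  have h : (Icc 1 m ×ˢ Icc 1 m).filter (fun ab => max ab.1 ab.2 = m)
      = Icc 1 m ×ˢ Icc 1 m \ Icc 1 (m - 1) ×ˢ Icc 1 (m - 1) := by
    ext ⟨a, b⟩
    simp only [mem_filter, mem_sdiff, mem_product, mem_Icc]
    omega
  have hsub : Icc 1 (m - 1) ×ˢ Icc 1 (m - 1) ⊆ Icc 1 m ×ˢ Icc 1 m :=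
    product_subset_product (Icc_subset_Icc_right (Nat.sub_le m 1))
      (Icc_subset_Icc_right (Nat.sub_le m 1))
  rw [h, card_sdiff_of_subset hsub]
  simp only [card_product, Nat.card_Icc, Nat.add_sub_cancel]
  rcases m with _ | m
  · rfl
  · simp only [Nat.add_sub_cancel]
    rw [show (m + 1) * (m + 1) = m * m + (2 * (m + 1) - 1) by lia, Nat.add_sub_cancel_left]

lemma sum_lcmPairsNotCoprime_prime_pow {p m : ℕ} (hp : p.Prime) (hm : 0 < m) :
    ∑ q ∈ lcmPairsNotCoprime (p ^ m), Λ q.1 * Λ q.2 / (Nat.lcm q.1 q.2 : ℝ)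
      = (2 * m - 1) * Real.log p ^ 2 / (p ^ m : ℕ) := by
  have hΛ : ∀ a, 0 < a → Λ (p ^ a) = Real.log p := fun a ha => by
    rw [vonMangoldt_apply_pow ha.ne', vonMangoldt_apply_prime hp]
  rw [lcmPairsNotCoprime_prime_pow hp, sum_map,
    sum_congr rfl (g := fun _ => Real.log p ^ 2 / (p ^ m : ℕ)), sum_const, card_filter_max_eq,
    nsmul_eq_mul, Nat.cast_sub (by lia), mul_div_assoc]
  · push_cast
    ring
  · rintro ⟨a, b⟩ hab
    obtain ⟨⟨⟨ha, -⟩, hb, -⟩, hmax⟩ := by simpa only [mem_filter, mem_product, mem_Icc] using hab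
    simp only [Function.Embedding.coeFn_mk]
    rw [hΛ a ha, hΛ b hb, Nat.lcm_pow_pow, hmax, sq]

open ArithmeticFunction in
theorem stmt_1_general (κ : ℕ) :
    ∑ q ∈ (Finset.Icc 1 κ ×ˢ Finset.Icc 1 κ).filter
        (fun q => Nat.lcm q.1 q.2 = κ ∧ 1 < Nat.gcd q.1 q.2),
      Λ q.1 * Λ q.2 / (Nat.lcm q.1 q.2 : ℝ)
      = (2 * Real.log κ - Λ κ) * Λ κ / κ := by
  change ∑ q ∈ lcmPairsNotCoprime κ, _ = _
  by_cases hκ : IsPrimePow κ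
  · obtain ⟨p, m, hp', hm, rfl⟩ := hκ
    have hp := Nat.prime_iff.2 hp'
    rw [sum_lcmPairsNotCoprime_prime_pow hp hm, vonMangoldt_apply_pow hm.ne',
      vonMangoldt_apply_prime hp, Nat.cast_pow, Real.log_pow]
    ring
  · rw [sum_lcmPairsNotCoprime_of_not_isPrimePow hκ, vonMangoldt_eq_zero_iff.2 hκ]
    ring

open ArithmeticFunction in
theorem stmt_1 (κ : ℕ) (hκ : 1 ≤ κ) :
    ∑ q ∈ (Finset.Icc 1 κ ×ˢ Finset.Icc 1 κ).filter
        (fun q => Nat.lcm q.1 q.2 = κ ∧ 1 < Nat.gcd q.1 q.2),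
      Λ q.1 * Λ q.2 / (Nat.lcm q.1 q.2 : ℝ)
      = (2 * Real.log κ - Λ κ) * Λ κ / κ :=
  stmt_1_general κ
end

section
/- For an integer n with n > |b| and −b not a perfect square, n² + b has a primitive divisor in the sequence (m² + b)_{m≥1} if and only if the largest prime factor of n² + b exceeds 2n. (A primitive divisor of A_n is an integer d > 1 with d ∣ A_n and gcd(d, A_m) = 1 for all nonzero A_m with m < n.) -/
/-!
For a prime `p ∣ n² + b` and any `m`, `p ∣ m² + b ↔ p ∣ (n - m)(n + m)`. If `p > 2n`, both factors
lie strictly between `0` and `p` for `0 ≤ m < n`, so `p` itself is a primitive divisor. Conversely,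
if `p ≤ 2n` then `m = n - p` or `m = p - n` lies in `[1, n)` and makes one of the factors equal
to `p`; the boundary cases `p = n` and `p = 2n` force `b = 0`, which is excluded. Hence a divisor
`d > 1` is primitive only if all its prime factors exceed `2n`.
-/

theorem dvd_sq_add_iff_dvd_mul {R : Type*} [CommRing R] {p n m b : R} (h : p ∣ n ^ 2 + b) :
    p ∣ m ^ 2 + b ↔ p ∣ (n - m) * (n + m) := by
  rw [show (n - m) * (n + m) = (n ^ 2 + b) - (m ^ 2 + b) by ring, dvd_sub_right h]

theorem not_dvd_sq_add_of_two_mul_lt {p : ℕ} {b n m : ℤ} (hp : p.Prime)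
    (hpn : (p : ℤ) ∣ n ^ 2 + b) (h2n : 2 * n < p) (hm : 0 ≤ m) (hmn : m < n) :
    ¬ (p : ℤ) ∣ m ^ 2 + b := by
  rw [dvd_sq_add_iff_dvd_mul hpn, (Nat.prime_iff_prime_int.mp hp).dvd_mul]
  rintro (h | h) <;> have := Int.le_of_dvd (by omega) h <;> omega

theorem exists_dvd_sq_add_of_le_two_mul {p : ℕ} {b n : ℤ} (hp : p.Prime)
    (hpn : (p : ℤ) ∣ n ^ 2 + b) (hb : b ≠ 0) (hbn : |b| < n) (hp2n : (p : ℤ) ≤ 2 * n) :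
    ∃ m, 1 ≤ m ∧ m < n ∧ (p : ℤ) ∣ m ^ 2 + b := by
  have hp2 := hp.two_le
  obtain ⟨hb₁, hb₂⟩ := abs_lt.mp hbn
  rcases lt_trichotomy (p : ℤ) n with hlt | rfl | hgt
  · refine ⟨n - p, by omega, by omega, (dvd_sq_add_iff_dvd_mul hpn).2 ?_⟩
    rw [sub_sub_cancel]
    exact dvd_mul_right _ _
  · have hpb : (p : ℤ) ∣ b := (dvd_add_right (dvd_pow_self _ two_ne_zero)).1 hpn
    exact absurd (Int.eq_zero_of_abs_lt_dvd hpb hbn) hb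
  · rcases hp2n.lt_or_eq with hlt | heq
    · refine ⟨p - n, by omega, by omega, (dvd_sq_add_iff_dvd_mul hpn).2 ?_⟩
      rw [add_sub_cancel]
      exact dvd_mul_left _ _
    · have h2p : 2 ∣ p := Int.natCast_dvd_natCast.mp ⟨n, heq⟩
      have := (Nat.prime_dvd_prime_iff_eq Nat.prime_two hp).mp h2p
      omega

theorem stmt_9 (b n : ℤ) (hb : ¬ ∃ s : ℤ, s * s = -b) (hn : |b| < n) :
    (∃ d : ℤ, 1 < d ∧ d ∣ n ^ 2 + b ∧
        ∀ m : ℤ, 1 ≤ m → m < n → m ^ 2 + b ≠ 0 → IsCoprime d (m ^ 2 + b))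
      ↔ ∃ p : ℕ, p.Prime ∧ (p : ℤ) ∣ n ^ 2 + b ∧ 2 * n < (p : ℤ) := by
  have hb0 : b ≠ 0 := fun h => hb ⟨0, by simp [h]⟩
  constructor
  · rintro ⟨d, hd, hdA, hcop⟩
    have hq : d.natAbs.minFac.Prime := Nat.minFac_prime (by omega)
    have hqd : (d.natAbs.minFac : ℤ) ∣ d := Int.natCast_dvd.mpr (Nat.minFac_dvd _)
    refine ⟨_, hq, hqd.trans hdA, not_le.mp fun hle => ?_⟩
    obtain ⟨m, hm, hmn, hqm⟩ := exists_dvd_sq_add_of_le_two_mul hq (hqd.trans hdA) hb0 hn hle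
    have hAm : m ^ 2 + b ≠ 0 := fun h => hb ⟨m, by linear_combination h⟩
    exact (Nat.prime_iff_prime_int.mp hq).not_isUnit
      ((hcop m hm hmn hAm).isUnit_of_dvd' hqd hqm)
  · rintro ⟨p, hp, hpA, hlt⟩
    refine ⟨p, mod_cast hp.one_lt, hpA, fun m hm hmn _ => ?_⟩
    exact (Nat.prime_iff_prime_int.mp hp).coprime_iff_not_dvd.mpr
      (not_dvd_sq_add_of_two_mul_lt hp hpA hlt (by omega) hmn)
end

section
/- Let K be a number field, α ∈ K, and let 𝔞 be the ideal denominator of the fractional ideal (α). Let 𝔭 be a prime ideal of K of degree one lying over the rational prime p which is unramified (𝔭² ∤ (p)), and let v ≥ 1. If 𝔭^v divides both (m+α)𝔞 and (n+α)𝔞 for integers m, n, then m ≡ n (mod p^v). -/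
/-!
Every element of `(m - n)𝔞` is the difference of an element of `(m + α)𝔞` and one of `(n + α)𝔞`,
so `𝔭^v ∣ (m - n)𝔞`. If `𝔭` divided `𝔞`, then `𝔭 ∣ (m + α)𝔞` would give `α𝔞 ⊆ 𝔭`, which is
impossible because the denominator `𝔞` is coprime to the numerator `α𝔞`; hence `𝔭^v ∣ (m - n)`.
Finally `𝔭 ∩ ℤ = pℤ` and `(p) = 𝔭𝔮` with `𝔭 ∤ 𝔮`, so each factor `𝔭` of `(m - n)` yields a
factor `p` of `m - n`.
-/

open NumberField

namespace Ideal

section Unramified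

variable {R : Type*} [CommRing R]

theorem absNorm_under_eq_of_natCast_mem {I : Ideal R} (hI : I ≠ ⊤) {p : ℕ} (hp : p.Prime)
    (hpI : (p : R) ∈ I) : absNorm (under ℤ I) = p := by
  have hdvd : absNorm (under ℤ I) ∣ p := by
    rw [← Int.natCast_dvd_natCast, ← Int.cast_mem_ideal_iff]
    exact_mod_cast hpI
  refine (hp.eq_one_or_self_of_dvd _ hdvd).resolve_left fun h => hI ?_
  exact (eq_top_iff_one I).mpr (by simpa [h] using Int.absNorm_under_mem I)

theorem intCast_mem_iff_of_natCast_mem {I : Ideal R} (hI : I ≠ ⊤) {p : ℕ} (hp : p.Prime)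
    (hpI : (p : R) ∈ I) (d : ℤ) : (d : R) ∈ I ↔ (p : ℤ) ∣ d := by
  rw [Int.cast_mem_ideal_iff, absNorm_under_eq_of_natCast_mem hI hp hpI]

variable [IsDedekindDomain R]

theorem pow_dvd_of_pow_dvd_span_intCast {P : Ideal R} (hP : Prime P) {p : ℕ}
    (hpP : ∀ d : ℤ, (d : R) ∈ P ↔ (p : ℤ) ∣ d) (hunram : ¬ P ^ 2 ∣ span {(p : R)})
    (w : ℕ) {c : ℤ} (hc : P ^ w ∣ span {(c : R)}) : (p : ℤ) ^ w ∣ c := by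
  induction w generalizing c with
  | zero => simp
  | succ w ih =>
    have hcP : (c : R) ∈ P :=
      le_of_dvd ((dvd_pow_self P w.succ_ne_zero).trans hc) (mem_span_singleton_self _)
    obtain ⟨c', rfl⟩ := (hpP c).mp hcP
    obtain ⟨Q, hQ⟩ : P ∣ span {(p : R)} := by
      rw [dvd_span_singleton]
      exact_mod_cast (hpP p).mpr dvd_rfl
    have hPQ : ¬ P ∣ Q := fun h => hunram (by rw [hQ, sq]; exact mul_dvd_mul_left P h)
    have hspan : span {(((p : ℤ) * c' : ℤ) : R)} = P * (Q * span {(c' : R)}) := by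
      rw [Int.cast_mul, Int.cast_natCast, ← span_singleton_mul_span_singleton, hQ, mul_assoc]
    rw [hspan, pow_succ', mul_dvd_mul_iff_left hP.ne_zero] at hc
    rw [pow_succ']
    exact mul_dvd_mul_left _ (ih (hP.pow_dvd_of_dvd_mul_left w hPQ hc))

end Unramified

section Denominator

variable {R K : Type*} [CommRing R] [Field K] [Algebra R K]

def IsDenominator (α : K) (𝔞 : Ideal R) : Prop :=
  ∀ x : R, x ∈ 𝔞 ↔ ∃ y : R, algebraMap R K x * α = algebraMap R K y

/-- `β𝔞 ∩ R`, as an ideal of `R`. -/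
def scaledBy (β : K) (𝔞 : Ideal R) : Ideal R :=
  span {x | ∃ a ∈ 𝔞, algebraMap R K x = β * algebraMap R K a}

theorem intCast_mul_add_mem_scaledBy {α : K} {𝔞 : Ideal R} {a y : R} (ha : a ∈ 𝔞)
    (hy : algebraMap R K a * α = algebraMap R K y) (n : ℤ) :
    (n : R) * a + y ∈ scaledBy ((n : K) + α) 𝔞 := by
  refine subset_span ⟨a, ha, ?_⟩
  rw [map_add, map_mul, map_intCast, ← hy]
  ring

theorem IsDenominator.span_sub_mul_le_of_scaledBy_le {α : K} {𝔞 : Ideal R}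
    (h𝔞 : IsDenominator α 𝔞) {I : Ideal R} {m n : ℤ} (hm : scaledBy ((m : K) + α) 𝔞 ≤ I)
    (hn : scaledBy ((n : K) + α) 𝔞 ≤ I) :
    span {((m - n : ℤ) : R)} * 𝔞 ≤ I := by
  rw [span_singleton_mul_le_iff]
  intro a ha
  obtain ⟨y, hy⟩ := (h𝔞 a).mp ha
  have hsub := I.sub_mem (hm (intCast_mul_add_mem_scaledBy ha hy m))
    (hn (intCast_mul_add_mem_scaledBy ha hy n))
  rwa [add_sub_add_right_eq_sub, ← sub_mul, ← Int.cast_sub] at hsub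

variable [IsDomain R] [IsFractionRing R K]

theorem IsDenominator.ne_bot {α : K} {𝔞 : Ideal R} (h𝔞 : IsDenominator α 𝔞) : 𝔞 ≠ ⊥ := by
  obtain ⟨⟨y, d⟩, hyd⟩ := IsLocalization.surj (nonZeroDivisors R) α
  have hd : (d : R) ∈ 𝔞 := (h𝔞 d).mpr ⟨y, by rw [mul_comm]; exact hyd⟩
  exact fun h𝔞bot => nonZeroDivisors.coe_ne_zero d (mem_bot.mp (h𝔞bot ▸ hd))

theorem exists_algebraMap_eq_of_mul_mem [IsNoetherianRing R] [IsIntegrallyClosed R]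
    {I : Ideal R} (hI : I ≠ ⊥) {β : K}
    (hβ : ∀ t ∈ I, ∃ y ∈ I, β * algebraMap R K t = algebraMap R K y) :
    ∃ y : R, algebraMap R K y = β := by
  refine IsIntegrallyClosed.isIntegral_iff.mp <|
    isIntegral_of_smul_mem_submodule (Submodule.map (Algebra.linearMap R K) I) ?_
      (Submodule.FG.map _ (IsNoetherian.noetherian I)) β ?_
  · obtain ⟨t, ht, ht0⟩ := (Submodule.ne_bot_iff I).mp hI
    exact (Submodule.ne_bot_iff _).mpr ⟨algebraMap R K t, ⟨t, ht, rfl⟩,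
      (IsFractionRing.to_map_ne_zero_of_mem_nonZeroDivisors (mem_nonZeroDivisors_of_ne_zero ht0))⟩
  · rintro _ ⟨t, ht, rfl⟩
    obtain ⟨y, hy, hβy⟩ := hβ t ht
    exact ⟨y, hy, hβy.symm⟩

end Denominator

section DedekindDenominator

variable {R K : Type*} [CommRing R] [IsDedekindDomain R] [Field K] [Algebra R K]
  [IsFractionRing R K]

/-- The denominator ideal of `α` is coprime to its numerator ideal `α𝔞`. -/
theorem IsDenominator.not_le_of_forall_numerator_mem {α : K} {𝔞 : Ideal R}
    (h𝔞 : IsDenominator α 𝔞) {P : Ideal R} (hP : Prime P)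
    (hnum : ∀ a ∈ 𝔞, ∀ y : R, algebraMap R K a * α = algebraMap R K y → y ∈ P) :
    ¬ 𝔞 ≤ P := by
  intro hle
  obtain ⟨𝔠, h𝔠⟩ := dvd_iff_le.mpr hle
  have h𝔠0 : 𝔠 ≠ 0 := by
    rintro rfl
    exact h𝔞.ne_bot (by rwa [mul_zero] at h𝔠)
  -- For `x ∈ 𝔠`, `xα` maps `P` into itself, hence is integral.
  have h𝔠le : 𝔠 ≤ 𝔞 := by
    intro x hx
    have hxα : ∀ t ∈ P, ∃ y ∈ P, algebraMap R K x * α * algebraMap R K t = algebraMap R K y := by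
      intro t ht
      have hxt : t * x ∈ 𝔞 := h𝔠 ▸ mul_mem_mul ht hx
      obtain ⟨y, hy⟩ := (h𝔞 _).mp hxt
      refine ⟨y, hnum _ hxt y hy, ?_⟩
      rw [← hy, map_mul]
      ring
    obtain ⟨y, hy⟩ := exists_algebraMap_eq_of_mul_mem hP.ne_zero hxα
    exact (h𝔞 x).mpr ⟨y, hy.symm⟩
  have hP1 : P * 𝔠 ∣ 1 * 𝔠 := by
    rw [one_mul, ← h𝔠]
    exact dvd_iff_le.mpr h𝔠le
  exact hP.not_isUnit (isUnit_of_dvd_one ((mul_dvd_mul_iff_right h𝔠0).mp hP1))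

theorem IsDenominator.not_le_of_dvd_scaledBy {α : K} {𝔞 : Ideal R}
    (h𝔞 : IsDenominator α 𝔞) {P : Ideal R} (hP : Prime P) {m : ℤ}
    (hm : P ∣ scaledBy ((m : K) + α) 𝔞) : ¬ 𝔞 ≤ P := by
  intro hle
  refine h𝔞.not_le_of_forall_numerator_mem hP (fun a ha y hy => ?_) hle
  have hmem := le_of_dvd hm (intCast_mul_add_mem_scaledBy ha hy m)
  simpa using P.sub_mem hmem (P.mul_mem_left (m : R) (hle ha))

end DedekindDenominator

end Ideal

theorem stmt_12_general (K : Type*) [Field K] [NumberField K] (α : K)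
    (𝔞 : Ideal (𝓞 K))
    (h𝔞 : ∀ x : 𝓞 K, x ∈ 𝔞 ↔ ∃ y : 𝓞 K, (x : K) * α = (y : K))
    (J : ℤ → Ideal (𝓞 K))
    (hJ : ∀ n : ℤ, J n = Ideal.span {x : 𝓞 K | ∃ a ∈ 𝔞, (x : K) = ((n : K) + α) * (a : K)})
    (𝔭 : Ideal (𝓞 K))
    (p : ℕ) (hp : p.Prime) (hdeg1 : Ideal.absNorm 𝔭 = p)
    (hunram : ¬ (𝔭 ^ 2 ∣ Ideal.span {(p : 𝓞 K)}))
    (v : ℕ) (m n : ℤ)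
    (hm : 𝔭 ^ v ∣ J m) (hn : 𝔭 ^ v ∣ J n) :
    (p : ℤ) ^ v ∣ m - n := by
  obtain rfl | hv := eq_or_ne v 0
  · simp
  have h𝔭 : Prime 𝔭 := (Ideal.irreducible_of_irreducible_absNorm (hdeg1 ▸ hp)).prime
  have hp𝔭 : ∀ d : ℤ, (d : 𝓞 K) ∈ 𝔭 ↔ (p : ℤ) ∣ d :=
    Ideal.intCast_mem_iff_of_natCast_mem (Ideal.isPrime_of_prime h𝔭).ne_top hp
      (hdeg1 ▸ Ideal.absNorm_mem 𝔭)
  have h𝔞' : Ideal.IsDenominator α 𝔞 := h𝔞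
  rw [hJ] at hm hn
  have h𝔞𝔭 : ¬ 𝔞 ≤ 𝔭 := h𝔞'.not_le_of_dvd_scaledBy h𝔭 ((dvd_pow_self 𝔭 hv).trans hm)
  have hmn : 𝔭 ^ v ∣ Ideal.span {((m - n : ℤ) : 𝓞 K)} * 𝔞 := Ideal.dvd_iff_le.mpr <|
    h𝔞'.span_sub_mul_le_of_scaledBy_le (Ideal.le_of_dvd hm) (Ideal.le_of_dvd hn)
  exact Ideal.pow_dvd_of_pow_dvd_span_intCast h𝔭 hp𝔭 hunram v <|
    h𝔭.pow_dvd_of_dvd_mul_right v (fun h => h𝔞𝔭 (Ideal.le_of_dvd h)) hmn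

theorem stmt_12 (K : Type*) [Field K] [NumberField K] (α : K)
    (𝔞 : Ideal (𝓞 K))
    (h𝔞 : ∀ x : 𝓞 K, x ∈ 𝔞 ↔ ∃ y : 𝓞 K, (x : K) * α = (y : K))
    (J : ℤ → Ideal (𝓞 K))
    (hJ : ∀ n : ℤ, J n = Ideal.span {x : 𝓞 K | ∃ a ∈ 𝔞, (x : K) = ((n : K) + α) * (a : K)})
    (𝔭 : Ideal (𝓞 K)) (h𝔭 : 𝔭.IsPrime) (h𝔭bot : 𝔭 ≠ ⊥)
    (p : ℕ) (hp : p.Prime) (hdeg1 : Ideal.absNorm 𝔭 = p)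
    (hunram : ¬ (𝔭 ^ 2 ∣ Ideal.span {(p : 𝓞 K)}))
    (v : ℕ) (hv : 1 ≤ v) (m n : ℤ)
    (hm : 𝔭 ^ v ∣ J m) (hn : 𝔭 ^ v ∣ J n) :
    (p : ℤ) ^ v ∣ m - n :=
  stmt_12_general K α 𝔞 h𝔞 J hJ 𝔭 p hp hdeg1 hunram v m n hm hn
end

section
/- Let α be an algebraic number of degree d ≥ 2 with minimal polynomial f ∈ ℤ[t] (up to sign, an irreducible polynomial with f(−α) = 0), leading coefficient A_f, and let 𝔞 be the denominator ideal of (α) in K = ℚ(α). Then for every integer n, Norm((n+α)𝔞)/Norm(𝔞) = |f(n)/A_f|. -/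
/-!
Write `γ = n + α`. Since `α 𝔞 ⊆ 𝓞 K`, also `γ 𝔞 ⊆ 𝓞 K`, and the ideal `J n` is the fractional
ideal `(γ) 𝔞`; multiplicativity of the absolute norm gives `N(J n) / N(𝔞) = |N_{K/ℚ}(γ)|`.
As `-α` generates `K`, `N_{K/ℚ}(n - (-α))` is the characteristic polynomial of `-α`, i.e. its
minimal polynomial, evaluated at `n`; by Gauss's lemma that minimal polynomial is `f / A_f`.
-/

open NumberField

open Polynomial

theorem Algebra.adjoin_singleton_neg {R A : Type*} [CommRing R] [Ring A] [Algebra R A] (x : A) :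
    Algebra.adjoin R {-x} = Algebra.adjoin R {x} := by
  have key : ∀ y : A, Algebra.adjoin R {-y} ≤ Algebra.adjoin R {y} := fun y =>
    Algebra.adjoin_le <| Set.singleton_subset_iff.mpr <|
      neg_mem (Algebra.subset_adjoin (Set.mem_singleton y))
  exact le_antisymm (key x) (by simpa using key (-x))

theorem Ideal.ne_bot_of_denominators_mem {R K : Type*} [CommRing R] [Nontrivial R] [Field K]
    [Algebra R K] [IsFractionRing R K] {I : Ideal R} (α : K)
    (hI : ∀ b : R, (∃ y : R, algebraMap R K b * α = algebraMap R K y) → b ∈ I) : I ≠ ⊥ := by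
  obtain ⟨b, y, hy⟩ := IsLocalization.exists_integer_multiple (nonZeroDivisors R) α
  refine fun hbot => nonZeroDivisors.coe_ne_zero b ?_
  rw [← Ideal.mem_bot, ← hbot]
  exact hI b ⟨y, by rw [hy, Algebra.smul_def]⟩

theorem Algebra.norm_algebraMap_sub_eq_eval_minpoly {F L : Type*} [Field F] [Field L]
    [Algebra F L] [FiniteDimensional F L] {x : L} (hx : Algebra.adjoin F {x} = ⊤) (r : F) :
    Algebra.norm F (algebraMap F L r - x) = (minpoly F x).eval r := by
  let pb := PowerBasis.ofAdjoinEqTop (Algebra.IsIntegral.isIntegral x) hx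
  rw [Algebra.norm_eq_matrix_det pb.basis, map_sub, AlgHom.commutes,
    Matrix.algebraMap_eq_diagonal, Pi.algebraMap_def, Algebra.algebraMap_self_apply,
    ← Matrix.scalar_apply, ← Matrix.eval_charpoly]
  exact congrArg (eval r) (charpoly_leftMulMatrix pb)

theorem minpoly.eval_intCast_eq_div_leadingCoeff {A : Type*} [Ring A] [Algebra ℚ A]
    [Nontrivial A] {f : ℤ[X]} (hf : Irreducible f) {x : A} (hx : Polynomial.aeval x f = 0)
    (n : ℤ) : (minpoly ℚ x).eval (n : ℚ) = f.eval n / f.leadingCoeff := by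
  have := algebraRat.charZero A
  have hdeg : f.natDegree ≠ 0 :=
    (natDegree_pos_of_aeval_root hf.ne_zero hx fun _ => by simp).ne'
  have hirr := (IsPrimitive.Int.irreducible_iff_irreducible_map_cast (hf.isPrimitive hdeg)).mp hf
  rw [← minpoly.eq_of_irreducible hirr (by simpa [← algebraMap_int_eq] using hx), eval_mul,
    eval_C, eval_intCast_map, leadingCoeff_map_of_injective (RingHom.injective_int _)]
  rfl

namespace FractionalIdeal

open scoped Pointwise in
theorem coeIdeal_span_eq_spanSingleton_mul {R P : Type*} [CommRing R] {S : Submonoid R}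
    [CommRing P] [Algebra R P] [IsLocalization S P] (I : Ideal R) {γ : P}
    (hγ : ∀ a ∈ I, ∃ x : R, algebraMap R P x = γ * algebraMap R P a) :
    ((Ideal.span {x : R | ∃ a ∈ I, algebraMap R P x = γ * algebraMap R P a} : Ideal R) :
      FractionalIdeal S P) = spanSingleton S γ * I := by
  have himage : algebraMap R P '' {x : R | ∃ a ∈ I, algebraMap R P x = γ * algebraMap R P a} =
      ({γ} : Set P) * (algebraMap R P '' I) := by
    ext y
    simp only [Set.mem_image, Set.mem_ofPred_eq, Set.singleton_mul, SetLike.mem_coe]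
    constructor
    · rintro ⟨x, ⟨a, ha, hx⟩, rfl⟩
      exact ⟨algebraMap R P a, ⟨a, ha, rfl⟩, hx.symm⟩
    · rintro ⟨_, ⟨a, ha, rfl⟩, rfl⟩
      obtain ⟨x, hx⟩ := hγ a ha
      exact ⟨x, ⟨a, ha, hx⟩, hx⟩
  have hI : IsLocalization.coeSubmodule P I = Submodule.span R (algebraMap R P '' I) := by
    rw [← IsLocalization.coeSubmodule_span, Ideal.span_eq]
  rw [← coeToSubmodule_inj, coe_mul, coe_spanSingleton, coe_coeIdeal, coe_coeIdeal,
    IsLocalization.coeSubmodule_span, hI, Submodule.span_mul_span, himage]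

end FractionalIdeal

open FractionalIdeal in
open scoped nonZeroDivisors in
theorem stmt_13_general (K : Type*) [Field K] [NumberField K] (α : K)
    (hgen : Algebra.adjoin ℚ {α} = ⊤)
    (f : Polynomial ℤ) (hf : Irreducible f)
    (hroot : Polynomial.aeval (-α) f = 0)
    (𝔞 : Ideal (𝓞 K))
    (h𝔞 : ∀ x : 𝓞 K, x ∈ 𝔞 ↔ ∃ y : 𝓞 K, (x : K) * α = (y : K))
    (J : ℤ → Ideal (𝓞 K))
    (hJ : ∀ n : ℤ, J n = Ideal.span {x : 𝓞 K | ∃ a ∈ 𝔞, (x : K) = ((n : K) + α) * (a : K)})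
    (n : ℤ) :
    (Ideal.absNorm (J n) : ℝ) / (Ideal.absNorm 𝔞 : ℝ)
      = |((f.eval n : ℤ) : ℝ) / ((f.leadingCoeff : ℤ) : ℝ)| := by
  have hmul_mem : ∀ a ∈ 𝔞, ∃ x : 𝓞 K, (x : K) = ((n : K) + α) * (a : K) := by
    intro a ha
    obtain ⟨y, hy⟩ := (h𝔞 a).mp ha
    exact ⟨n * a + y, by simp only [map_add, map_mul, map_intCast, ← hy]; ring⟩
  have hJn : (J n : FractionalIdeal (𝓞 K)⁰ K) =
      spanSingleton _ ((n : K) + α) * (𝔞 : FractionalIdeal (𝓞 K)⁰ K) :=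
    by rw [hJ n]; exact coeIdeal_span_eq_spanSingleton_mul 𝔞 hmul_mem
  have hnorm : Algebra.norm ℚ ((n : K) + α) = f.eval n / f.leadingCoeff := by
    rw [show (n : K) + α = algebraMap ℚ K n - -α by simp,
      Algebra.norm_algebraMap_sub_eq_eval_minpoly (by rwa [Algebra.adjoin_singleton_neg]),
      minpoly.eval_intCast_eq_div_leadingCoeff hf hroot]
  have h𝔞_ne : (Ideal.absNorm 𝔞 : ℝ) ≠ 0 := by
    exact_mod_cast Ideal.absNorm_eq_zero_iff.not.mpr
      (Ideal.ne_bot_of_denominators_mem α fun b hb => (h𝔞 b).mpr hb)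
  have hQ : (Ideal.absNorm (J n) : ℚ) =
      |((f.eval n : ℤ) : ℚ) / (f.leadingCoeff : ℚ)| * Ideal.absNorm 𝔞 := by
    rw [← coeIdeal_absNorm (K := K), hJn, map_mul, absNorm_span_singleton, coeIdeal_absNorm,
      hnorm]
  rw [div_eq_iff h𝔞_ne]
  exact_mod_cast congrArg ((↑) : ℚ → ℝ) hQ

theorem stmt_13 (K : Type*) [Field K] [NumberField K] (α : K)
    (hgen : Algebra.adjoin ℚ {α} = ⊤)
    (d : ℕ) (hd : 2 ≤ d)
    (f : Polynomial ℤ) (hf : Irreducible f) (hdeg : f.natDegree = d)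
    (hroot : Polynomial.aeval (-α) f = 0)
    (𝔞 : Ideal (𝓞 K))
    (h𝔞 : ∀ x : 𝓞 K, x ∈ 𝔞 ↔ ∃ y : 𝓞 K, (x : K) * α = (y : K))
    (J : ℤ → Ideal (𝓞 K))
    (hJ : ∀ n : ℤ, J n = Ideal.span {x : 𝓞 K | ∃ a ∈ 𝔞, (x : K) = ((n : K) + α) * (a : K)})
    (n : ℤ) :
    (Ideal.absNorm (J n) : ℝ) / (Ideal.absNorm 𝔞 : ℝ)
      = |((f.eval n : ℤ) : ℝ) / ((f.leadingCoeff : ℤ) : ℝ)| :=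
  stmt_13_general K α hgen f hf hroot 𝔞 h𝔞 J hJ n
end
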